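/- Fix N ≥ 1 and d ≥ 1, and let μ be Lebesgue measure (volume) on the space Fin N → (Fin d → ℝ). Let D be a measurable fundamental domain (MeasureTheory.IsFundamentalDomain) for the action of S_N given by σ • x = x ∘ σ⁻¹. Let 𝒮 be the set of ψ ∈ L²(μ, ℂ) such that for every σ ∈ S_N, ψ(x ∘ σ) = ψ(x) for μ-almost every x (the symmetric subspace). Then 𝒮 is a closed linear subspace of L²(μ, ℂ), and the map sending ψ ∈ 𝒮 to √(N!) times the restriction of ψ to D (viewed as an element of L²(μ restricted to D, ℂ)) is a linear isometric bijection from 𝒮 onto L²(μ.restrict D, ℂ). -/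

import Mathlib

/-!
Let `s` be a fundamental domain for a finite group `G` acting by measure-preserving maps. For a
`G`-invariant `f`, the integral of `‖f‖ᵖ` over the whole space is the sum of `|G|` equal integrals
over the translates of `s`, so restriction to `s` multiplied by `|G| ^ (1 / p)` is isometric on
invariant `Lᵖ` functions. It is onto: `φ` on `s` extends to the invariant function
`x ↦ ∑ g, (indicator s φ) (g • x)`, which equals `φ` a.e. on `s` since the translates of `s` are
a.e. disjoint. For `S_N` acting on configurations, `p = 2` and `|G| = N!`.
-/

open MeasureTheory

/-- The action of the symmetric group `S_N` on tuples: `σ • x = x ∘ σ⁻¹`. -/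
instance permFunMulAction (N : ℕ) (X : Type*) : MulAction (Equiv.Perm (Fin N)) (Fin N → X) where
  smul σ x := x ∘ ⇑σ⁻¹
  one_smul x := by
    funext i
    simp [HSMul.hSMul]
  mul_smul σ τ x := by
    funext i
    simp [HSMul.hSMul, mul_inv_rev, Equiv.Perm.mul_apply]

open Pointwise ENNReal

section PermAction

variable {N : ℕ} {X : Type*}

lemma Equiv.Perm.smul_fun_eq_comp (σ : Equiv.Perm (Fin N)) (x : Fin N → X) :
    σ • x = x ∘ ⇑σ⁻¹ := rfl

instance [MeasurableSpace X] : MeasurableConstSMul (Equiv.Perm (Fin N)) (Fin N → X) :=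
  ⟨fun _ => measurable_pi_lambda _ fun _ => measurable_pi_apply _⟩

instance [MeasureSpace X] [SigmaFinite (volume : Measure X)] :
    SMulInvariantMeasure (Equiv.Perm (Fin N)) (Fin N → X) volume :=
  ⟨fun σ _ hs => (volume_preserving_arrowCongr' σ (MeasurableEquiv.refl X)
    (.id _)).measure_preimage hs.nullMeasurableSet⟩

end PermAction

namespace MeasureTheory

variable {G α : Type*} [Group G] [MulAction G α] [MeasurableSpace α] {μ : Measure α} {s : Set α}

namespace IsFundamentalDomain

variable [Fintype G]

theorem ae_restrict_sum_indicator_smul_eq (h : IsFundamentalDomain G s μ) {E : Type*}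
    [AddCommMonoid E] (f : α → E) :
    ∀ᵐ x ∂μ.restrict s, ∑ g : G, s.indicator f (g • x) = f x := by
  have hdisj : ∀ᵐ x ∂μ, ∀ g : G, g ≠ 1 → x ∈ s → g • x ∉ s := by
    refine ae_all_iff.2 fun g => ?_
    by_cases hg : g = 1
    · simp [hg]
    have hnull : μ ((1 : G) • s ∩ g⁻¹ • s) = 0 := h.aedisjoint (Ne.symm (inv_ne_one.2 hg))
    filter_upwards [measure_eq_zero_iff_ae_notMem.1 hnull] with x hx _ hxs hgx
    exact hx ⟨by simpa using hxs, Set.mem_smul_set_iff_inv_smul_mem.2 (by simpa using hgx)⟩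
  filter_upwards [ae_restrict_mem₀ h.nullMeasurableSet, ae_restrict_of_ae hdisj] with x hxs hx
  rw [Finset.sum_eq_single_of_mem 1 (Finset.mem_univ _)
    fun g _ hg => Set.indicator_of_notMem (hx g hg hxs) f, one_smul, Set.indicator_of_mem hxs]

variable [MeasurableConstSMul G α] [SMulInvariantMeasure G α μ]

theorem lintegral_eq_card_mul_setLIntegral (h : IsFundamentalDomain G s μ) {f : α → ℝ≥0∞}
    (hf : ∀ g : G, ∀ᵐ x ∂μ, f (g • x) = f x) :
    ∫⁻ x, f x ∂μ = Fintype.card G * ∫⁻ x in s, f x ∂μ := by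
  have hterm (g : G) : ∫⁻ x in s, f (g • x) ∂μ = ∫⁻ x in s, f x ∂μ :=
    lintegral_congr_ae (ae_restrict_of_ae (hf g))
  rw [h.lintegral_eq_tsum'', tsum_congr hterm, tsum_fintype, Finset.sum_const, nsmul_eq_mul,
    Finset.card_univ]

theorem eLpNorm_eq_card_rpow_mul (h : IsFundamentalDomain G s μ) {E : Type*}
    [NormedAddCommGroup E] {p : ℝ≥0∞} (hp0 : p ≠ 0) (hp : p ≠ ∞) {f : α → E}
    (hf : ∀ g : G, ∀ᵐ x ∂μ, f (g • x) = f x) :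
    eLpNorm f p μ = (Fintype.card G : ℝ≥0∞) ^ (1 / p.toReal) * eLpNorm f p (μ.restrict s) := by
  simp only [eLpNorm_eq_lintegral_rpow_enorm_toReal hp0 hp]
  rw [h.lintegral_eq_card_mul_setLIntegral fun g => (hf g).mono fun x hx => by rw [hx],
    ENNReal.mul_rpow_of_nonneg _ _ (by positivity)]

end IsFundamentalDomain

variable [MeasurableConstSMul G α] [SMulInvariantMeasure G α μ]
  {E : Type*} [NormedAddCommGroup E] {p : ℝ≥0∞}

section Invariant

variable {𝕜 : Type*} [NormedRing 𝕜] [Module 𝕜 E] [IsBoundedSMul 𝕜 E]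

variable (G μ E p 𝕜) in
def invariantLp : Submodule 𝕜 (Lp E p μ) where
  carrier := {f | ∀ g : G, Lp.compMeasurePreserving (g • ·) (measurePreserving_smul g μ) f = f}
  add_mem' hf hg g := by rw [map_add, hf g, hg g]
  zero_mem' g := map_zero _
  smul_mem' c f hf g :=
    ((Lp.compMeasurePreservingₗ 𝕜 _ _).map_smul c f).trans (congrArg (c • ·) (hf g))

theorem mem_invariantLp_iff {f : Lp E p μ} :
    f ∈ invariantLp G μ E p 𝕜 ↔ ∀ g : G, ∀ᵐ x ∂μ, f (g • x) = f x := by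
  refine forall_congr' fun g => ?_
  have hcomp := Lp.coeFn_compMeasurePreserving f (measurePreserving_smul g μ)
  rw [Lp.ext_iff]
  exact ⟨hcomp.symm.trans, hcomp.trans⟩

theorem isClosed_invariantLp [Fact (1 ≤ p)] :
    IsClosed (invariantLp G μ E p 𝕜 : Set (Lp E p μ)) := by
  change IsClosed {f | ∀ g : G, _}
  rw [Set.ofPred_forall]
  exact isClosed_iInter fun g => isClosed_eq
    (Lp.compMeasurePreservingₗᵢ 𝕜 _ (measurePreserving_smul g μ)).continuous continuous_id

end Invariant

namespace IsFundamentalDomain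

variable [Fintype G]

theorem norm_Lp_eq_card_rpow_mul [Fact (1 ≤ p)] (h : IsFundamentalDomain G s μ) (hp : p ≠ ∞)
    {f : Lp E p μ} (hf : ∀ g : G, ∀ᵐ x ∂μ, f (g • x) = f x) :
    ‖f‖ = (Fintype.card G : ℝ) ^ (1 / p.toReal) * ‖((Lp.memLp f).restrict s).toLp f‖ := by
  have hp0 : p ≠ 0 := (zero_lt_one.trans_le Fact.out).ne'
  rw [Lp.norm_def, Lp.norm_def, eLpNorm_congr_ae (MemLp.coeFn_toLp _),
    h.eLpNorm_eq_card_rpow_mul hp0 hp hf, ENNReal.toReal_mul, ← ENNReal.toReal_rpow,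
    ENNReal.toReal_natCast]

theorem exists_invariant_toLp_restrict_eq (h : IsFundamentalDomain G s μ) (hs : MeasurableSet s)
    (φ : Lp E p (μ.restrict s)) :
    ∃ f : Lp E p μ, (∀ g : G, ∀ᵐ x ∂μ, f (g • x) = f x) ∧
      ((Lp.memLp f).restrict s).toLp f = φ := by
  set F : α → E := fun x => ∑ g : G, s.indicator φ (g • x)
  have hF_inv (g : G) (x : α) : F (g • x) = F x :=
    Fintype.sum_equiv (Equiv.mulRight g) _ _ fun k => by simp [mul_smul]
  have hF_memLp : MemLp F p μ := by
    refine memLp_finsetSum (f := fun g x => s.indicator φ (g • x)) Finset.univ fun g _ => ?_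
    exact ((memLp_indicator_iff_restrict hs).2 (Lp.memLp φ)).comp_measurePreserving
      (measurePreserving_smul g μ)
  have hF_coe := hF_memLp.coeFn_toLp
  refine ⟨hF_memLp.toLp F, fun g => ?_, ?_⟩
  · filter_upwards [(measurePreserving_smul g μ).quasiMeasurePreserving.ae_eq_comp hF_coe, hF_coe]
      with x hgx hx
    exact hgx.trans ((hF_inv g x).trans hx.symm)
  · ext1
    filter_upwards [MemLp.coeFn_toLp ((Lp.memLp (hF_memLp.toLp F)).restrict s),
      ae_restrict_of_ae hF_coe, h.ae_restrict_sum_indicator_smul_eq φ] with x h1 h2 h3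
    rw [h1, h2]
    exact h3

variable {𝕜 : Type*} [RCLike 𝕜] [NormedSpace 𝕜 E] [Fact (1 ≤ p)]

variable (𝕜) in
noncomputable def invariantLpEquiv (h : IsFundamentalDomain G s μ) (hs : MeasurableSet s)
    (hp : p ≠ ∞) : invariantLp G μ E p 𝕜 ≃ₗᵢ[𝕜] Lp E p (μ.restrict s) :=
  let c : ℝ := (Fintype.card G : ℝ) ^ (1 / p.toReal)
  have hc : 0 < c := by positivity
  let L : invariantLp G μ E p 𝕜 →ₗ[𝕜] Lp E p (μ.restrict s) :=
    (c : 𝕜) • ((LpToLpRestrictCLM α E 𝕜 μ p s).toLinearMap ∘ₗ (invariantLp G μ E p 𝕜).subtype)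
  have hL_norm (f : invariantLp G μ E p 𝕜) : ‖L f‖ = ‖f‖ := by
    rw [Submodule.coe_norm, h.norm_Lp_eq_card_rpow_mul hp (mem_invariantLp_iff.1 f.2),
      LinearMap.smul_apply, norm_smul, RCLike.norm_ofReal, abs_of_pos hc]
    rfl
  have hL_surj : Function.Surjective L := fun φ => by
    obtain ⟨f, hf, rfl⟩ := h.exists_invariant_toLp_restrict_eq hs φ
    refine ⟨(c : 𝕜)⁻¹ • ⟨f, mem_invariantLp_iff.2 hf⟩, ?_⟩
    rw [map_smul, LinearMap.smul_apply, smul_smul,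
      inv_mul_cancel₀ (RCLike.ofReal_ne_zero.2 hc.ne'), one_smul]
    rfl
  LinearIsometryEquiv.ofSurjective ⟨L, hL_norm⟩ hL_surj

theorem invariantLpEquiv_apply (h : IsFundamentalDomain G s μ) (hs : MeasurableSet s)
    (hp : p ≠ ∞) (f : invariantLp G μ E p 𝕜) :
    h.invariantLpEquiv 𝕜 hs hp f = (((Fintype.card G : ℝ) ^ (1 / p.toReal) : ℝ) : 𝕜) •
      ((Lp.memLp (f : Lp E p μ)).restrict s).toLp f :=
  rfl

end IsFundamentalDomain

end MeasureTheory

theorem stmt_12_general (N d : ℕ)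
    (D : Set (Fin N → Fin d → ℝ)) (hDmeas : MeasurableSet D)
    (hDfd : IsFundamentalDomain (Equiv.Perm (Fin N)) D
      (volume : Measure (Fin N → Fin d → ℝ))) :
    ∃ A : Submodule ℂ (Lp ℂ 2 (volume : Measure (Fin N → Fin d → ℝ))),
      (A : Set (Lp ℂ 2 (volume : Measure (Fin N → Fin d → ℝ))))
        = {ψ : Lp ℂ 2 (volume : Measure (Fin N → Fin d → ℝ)) |
            ∀ σ : Equiv.Perm (Fin N), ∀ᵐ x ∂(volume : Measure (Fin N → Fin d → ℝ)),
              ψ (x ∘ ⇑σ) = ψ x} ∧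
      IsClosed (A : Set (Lp ℂ 2 (volume : Measure (Fin N → Fin d → ℝ)))) ∧
      ∃ e : A ≃ₗᵢ[ℂ] Lp ℂ 2 ((volume : Measure (Fin N → Fin d → ℝ)).restrict D),
        ∀ ψ : A, e ψ = ((Real.sqrt N.factorial : ℝ) : ℂ) •
          MemLp.toLp ⇑(ψ : Lp ℂ 2 (volume : Measure (Fin N → Fin d → ℝ)))
            ((Lp.memLp (ψ : Lp ℂ 2 (volume : Measure (Fin N → Fin d → ℝ)))).restrict D) := by
  refine ⟨invariantLp (Equiv.Perm (Fin N)) volume ℂ 2 ℂ, ?_, isClosed_invariantLp,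
    hDfd.invariantLpEquiv ℂ hDmeas ENNReal.ofNat_ne_top, fun ψ => ?_⟩
  · ext ψ
    rw [SetLike.mem_coe, mem_invariantLp_iff]
    exact (Equiv.inv _).forall_congr fun σ => by simp [Equiv.Perm.smul_fun_eq_comp]
  · rw [IsFundamentalDomain.invariantLpEquiv_apply, Fintype.card_perm, Fintype.card_fin,
      Real.sqrt_eq_rpow, ENNReal.toReal_ofNat]
    rfl

/-- The symmetric subspace `𝒮` of `L²(volume, ℂ)` over `Fin N → (Fin d → ℝ)` is a
closed linear subspace, and `ψ ↦ √(N!) · (ψ restricted to a fundamental domain D)` is a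
linear isometric bijection from `𝒜` onto `L²(volume.restrict D, ℂ)`. -/
theorem stmt_12 (N d : ℕ) (hN : 1 ≤ N) (hd : 1 ≤ d)
    (D : Set (Fin N → Fin d → ℝ)) (hDmeas : MeasurableSet D)
    (hDfd : IsFundamentalDomain (Equiv.Perm (Fin N)) D
      (volume : Measure (Fin N → Fin d → ℝ))) :
    ∃ A : Submodule ℂ (Lp ℂ 2 (volume : Measure (Fin N → Fin d → ℝ))),
      (A : Set (Lp ℂ 2 (volume : Measure (Fin N → Fin d → ℝ))))
        = {ψ : Lp ℂ 2 (volume : Measure (Fin N → Fin d → ℝ)) |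
            ∀ σ : Equiv.Perm (Fin N), ∀ᵐ x ∂(volume : Measure (Fin N → Fin d → ℝ)),
              ψ (x ∘ ⇑σ) = ψ x} ∧
      IsClosed (A : Set (Lp ℂ 2 (volume : Measure (Fin N → Fin d → ℝ)))) ∧
      ∃ e : A ≃ₗᵢ[ℂ] Lp ℂ 2 ((volume : Measure (Fin N → Fin d → ℝ)).restrict D),
        ∀ ψ : A, e ψ = ((Real.sqrt N.factorial : ℝ) : ℂ) •
          MemLp.toLp ⇑(ψ : Lp ℂ 2 (volume : Measure (Fin N → Fin d → ℝ)))
            ((Lp.memLp (ψ : Lp ℂ 2 (volume : Measure (Fin N → Fin d → ℝ)))).restrict D) :=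
  stmt_12_general N d D hDmeas hDfd
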